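/- arXiv:1906.03620 — 4 statements merged into one kernel-verified Lean document; each statement's English description precedes it below -/
import Mathlib

section
/- Let h: ℝ^m → ℝ be convex, differentiable with L_y-Lipschitz gradient on ℝ^m, A an n×m matrix, and g(x) = max_y { ⟨Ax, y⟩ - h(y) } (assumed finite with attained maximizer y(x)). Then for all x₁, x₂ ∈ (Ker A)^⊥, ⟨∇g(x₁) - ∇g(x₂), x₁ - x₂⟩ ≥ (λ⁺_min(AᵀA)/L_y) ‖x₁ - x₂‖₂², i.e. g is (λ⁺_min(AᵀA)/L_y)-strongly convex on (Ker A)^⊥. -/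
/-!
Since `y x` maximizes `⟪A x, ·⟫ - h`, first-order optimality gives `∇h (y x) = A x`. The gradient
of a convex function with `L`-Lipschitz gradient is `1/L`-cocoercive (Baillon–Haddad, from the
descent lemma and the first-order convexity inequality), so
`⟪Aᵀ(y x₁ - y x₂), x₁ - x₂⟫ = ⟪∇h (y x₁) - ∇h (y x₂), y x₁ - y x₂⟫ ≥ ‖A (x₁ - x₂)‖² / L`,
and `‖A v‖² ≥ λ ‖v‖²` on `(ker A)ᗮ`.
-/

open Set
open scoped InnerProductSpace

section
variable {E : Type*} [NormedAddCommGroup E] [InnerProductSpace ℝ E] [CompleteSpace E]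
  {f : E → ℝ} {f' : E → E} {L : ℝ}

theorem HasGradientAt.hasDerivAt_comp_add_smul {g a v : E} {t : ℝ}
    (hf : HasGradientAt f g (a + t • v)) :
    HasDerivAt (fun s : ℝ => f (a + s • v)) ⟪g, v⟫_ℝ t := by
  have hline : HasDerivAt (fun s : ℝ => a + s • v) v t := by
    simpa using ((hasDerivAt_id t).smul_const v).const_add a
  simpa [InnerProductSpace.toDual_apply_apply, Function.comp_def] using
    (hasGradientAt_iff_hasFDerivAt.mp hf).comp_hasDerivAt t hline

theorem ConvexOn.add_inner_le_of_hasGradientAt (hf : ConvexOn ℝ univ f) {g a : E}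
    (hg : HasGradientAt f g a) (z : E) : f a + ⟪g, z - a⟫_ℝ ≤ f z := by
  have hconv : ConvexOn ℝ univ fun s : ℝ => f (a + s • (z - a)) := by
    simpa [Function.comp_def, AffineMap.lineMap_apply_module', add_comm] using
      hf.comp_affineMap (AffineMap.lineMap a z)
  have hderiv := (show HasGradientAt f g (a + (0 : ℝ) • (z - a)) by simpa using hg)
    |>.hasDerivAt_comp_add_smul
  have hslope := hconv.le_slope_of_hasDerivAt (mem_univ 0) (mem_univ 1) zero_lt_one hderiv
  simp only [slope_def_field, one_smul, zero_smul, add_zero, add_sub_cancel, sub_zero,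
    div_one] at hslope
  linarith

theorem le_add_inner_add_sq_of_lipschitz_gradient (hf : ∀ z, HasGradientAt f (f' z) z)
    (hlip : ∀ z₁ z₂, ‖f' z₁ - f' z₂‖ ≤ L * ‖z₁ - z₂‖) (a b : E) :
    f b ≤ f a + ⟪f' a, b - a⟫_ℝ + L / 2 * ‖b - a‖ ^ 2 := by
  set v := b - a
  have hderiv (t : ℝ) : HasDerivAt (fun s => L / 2 * s ^ 2 * ‖v‖ ^ 2 + s * ⟪f' a, v⟫_ℝ - f (a + s • v))
      (L * t * ‖v‖ ^ 2 + ⟪f' a, v⟫_ℝ - ⟪f' (a + t • v), v⟫_ℝ) t := by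
    refine ((((hasDerivAt_pow 2 t).const_mul (L / 2)).mul_const _).add
      ((hasDerivAt_id t).mul_const _)).sub (hf _).hasDerivAt_comp_add_smul |>.congr_deriv ?_
    ring
  -- the derivative is `≥ 0` for `t ≥ 0` by Cauchy–Schwarz and the Lipschitz bound
  have hmono := monotoneOn_of_hasDerivWithinAt_nonneg (convex_Ici (0 : ℝ))
    (fun t _ => (hderiv t).continuousAt.continuousWithinAt)
    (fun t _ => (hderiv t).hasDerivWithinAt) fun t ht => by
      rw [interior_Ici, mem_Ioi] at ht
      have hclose : ‖f' (a + t • v) - f' a‖ ≤ L * (t * ‖v‖) := by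
        simpa [norm_smul, abs_of_pos ht] using hlip (a + t • v) a
      have hinner := (real_inner_le_norm (f' (a + t • v) - f' a) v).trans
        (mul_le_mul_of_nonneg_right hclose (norm_nonneg v))
      rw [inner_sub_left] at hinner
      nlinarith
  have hend := hmono self_mem_Ici (mem_Ici.mpr zero_le_one) zero_le_one
  simp only [ne_eq, OfNat.ofNat_ne_zero, not_false_eq_true, zero_pow, mul_zero, zero_mul, add_zero,
    zero_smul, zero_sub, one_pow, mul_one, one_mul, one_smul, add_sub_cancel, neg_le_sub_iff_le_add,
    v] at hend
  linarith

theorem ConvexOn.add_inner_add_sq_le (hconv : ConvexOn ℝ univ f) (hL : 0 < L)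
    (hf : ∀ z, HasGradientAt f (f' z) z) (hlip : ∀ z₁ z₂, ‖f' z₁ - f' z₂‖ ≤ L * ‖z₁ - z₂‖)
    (u v : E) : f v + ⟪f' v, u - v⟫_ℝ + L⁻¹ / 2 * ‖f' u - f' v‖ ^ 2 ≤ f u := by
  set d := f' u - f' v
  -- compare both first-order bounds at the gradient step from `u`
  set w := u - L⁻¹ • d
  have hv := hconv.add_inner_le_of_hasGradientAt (hf v) w
  have hu := le_add_inner_add_sq_of_lipschitz_gradient hf hlip u w
  have hwv : w - v = (u - v) - L⁻¹ • d := by simp only [w]; abel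
  have hwu : w - u = -(L⁻¹ • d) := by simp only [w]; abel
  rw [hwv, inner_sub_right, inner_smul_right] at hv
  rw [hwu, inner_neg_right, inner_smul_right, norm_neg, norm_smul, Real.norm_eq_abs,
    abs_of_pos (inv_pos.mpr hL)] at hu
  have hd : ⟪f' u, d⟫_ℝ - ⟪f' v, d⟫_ℝ = ‖d‖ ^ 2 := by
    rw [← inner_sub_left, real_inner_self_eq_norm_sq]
  have hLinv : L * L⁻¹ = 1 := mul_inv_cancel₀ hL.ne'
  linear_combination hv + hu - L⁻¹ * hd + L⁻¹ * ‖d‖ ^ 2 / 2 * hLinv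

theorem ConvexOn.inv_mul_sq_norm_sub_le_inner (hconv : ConvexOn ℝ univ f) (hL : 0 < L)
    (hf : ∀ z, HasGradientAt f (f' z) z) (hlip : ∀ z₁ z₂, ‖f' z₁ - f' z₂‖ ≤ L * ‖z₁ - z₂‖)
    (u v : E) : L⁻¹ * ‖f' u - f' v‖ ^ 2 ≤ ⟪f' u - f' v, u - v⟫_ℝ := by
  have huv := hconv.add_inner_add_sq_le hL hf hlip u v
  have hvu := hconv.add_inner_add_sq_le hL hf hlip v u
  rw [norm_sub_rev, ← neg_sub u v, inner_neg_right] at hvu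
  rw [inner_sub_left]
  linarith

theorem HasGradientAt.eq_of_forall_inner_sub_le {g c y : E} (hf : HasGradientAt f g y)
    (hmax : ∀ z, ⟪c, z⟫_ℝ - f z ≤ ⟪c, y⟫_ℝ - f y) : g = c := by
  have hF : HasFDerivAt (fun z => ⟪c, z⟫_ℝ - f z)
      (innerSL ℝ c - InnerProductSpace.toDual ℝ E g) y :=
    (innerSL ℝ c).hasFDerivAt.sub (hasGradientAt_iff_hasFDerivAt.mp hf)
  have hzero := congr($((show IsLocalMax _ y from .of_forall hmax).hasFDerivAt_eq_zero hF) (c - g))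
  simp only [sub_apply, innerSL_apply_apply, InnerProductSpace.toDual_apply_apply,
    ← inner_sub_left, zero_apply, inner_self_eq_zero] at hzero
  exact (sub_eq_zero.mp hzero).symm

end

theorem stmt_2_general {n m : ℕ} (Ly : ℝ) (hLy : 0 < Ly)
    (h : EuclideanSpace ℝ (Fin m) → ℝ)
    (hconv : ConvexOn ℝ Set.univ h)
    (h' : EuclideanSpace ℝ (Fin m) → EuclideanSpace ℝ (Fin m))
    (hdiff : ∀ z, HasGradientAt h (h' z) z)
    (hlip : ∀ z₁ z₂, ‖h' z₁ - h' z₂‖ ≤ Ly * ‖z₁ - z₂‖)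
    (A : EuclideanSpace ℝ (Fin n) →L[ℝ] EuclideanSpace ℝ (Fin m))
    (y : EuclideanSpace ℝ (Fin n) → EuclideanSpace ℝ (Fin m))
    (hy : ∀ x z, ⟪A x, z⟫_ℝ - h z ≤ ⟪A x, y x⟫_ℝ - h (y x))
    (lam : ℝ)
    -- lam is the smallest positive eigenvalue of AᵀA: on (Ker A)ᗮ one has ‖Av‖² ≥ lam‖v‖²
    (hlam_min : ∀ v ∈ (LinearMap.ker (A : EuclideanSpace ℝ (Fin n) →ₗ[ℝ] EuclideanSpace ℝ (Fin m)))ᗮ, lam * ‖v‖ ^ 2 ≤ ‖A v‖ ^ 2) :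
    ∀ x₁ ∈ (LinearMap.ker (A : EuclideanSpace ℝ (Fin n) →ₗ[ℝ] EuclideanSpace ℝ (Fin m)))ᗮ, ∀ x₂ ∈ (LinearMap.ker (A : EuclideanSpace ℝ (Fin n) →ₗ[ℝ] EuclideanSpace ℝ (Fin m)))ᗮ,
      ⟪ContinuousLinearMap.adjoint A (y x₁) - ContinuousLinearMap.adjoint A (y x₂),
          x₁ - x₂⟫_ℝ ≥ (lam / Ly) * ‖x₁ - x₂‖ ^ 2 := by
  intro x₁ hx₁ x₂ hx₂
  have hA (x) : h' (y x) = A x := (hdiff (y x)).eq_of_forall_inner_sub_le (hy x)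
  calc lam / Ly * ‖x₁ - x₂‖ ^ 2 ≤ Ly⁻¹ * ‖A x₁ - A x₂‖ ^ 2 := by
        rw [← map_sub, div_eq_inv_mul, mul_assoc]
        gcongr
        exact hlam_min _ (Submodule.sub_mem _ hx₁ hx₂)
    _ = Ly⁻¹ * ‖h' (y x₁) - h' (y x₂)‖ ^ 2 := by rw [hA, hA]
    _ ≤ ⟪h' (y x₁) - h' (y x₂), y x₁ - y x₂⟫_ℝ :=
        hconv.inv_mul_sq_norm_sub_le_inner hLy hdiff hlip _ _
    _ = ⟪ContinuousLinearMap.adjoint A (y x₁) - ContinuousLinearMap.adjoint A (y x₂),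
          x₁ - x₂⟫_ℝ := by
        rw [hA, hA, ← map_sub, ← map_sub, ContinuousLinearMap.adjoint_inner_left, real_inner_comm]

theorem stmt_2 {n m : ℕ} (Ly : ℝ) (hLy : 0 < Ly)
    (h : EuclideanSpace ℝ (Fin m) → ℝ)
    (hconv : ConvexOn ℝ Set.univ h)
    (h' : EuclideanSpace ℝ (Fin m) → EuclideanSpace ℝ (Fin m))
    (hdiff : ∀ z, HasGradientAt h (h' z) z)
    (hlip : ∀ z₁ z₂, ‖h' z₁ - h' z₂‖ ≤ Ly * ‖z₁ - z₂‖)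
    (A : EuclideanSpace ℝ (Fin n) →L[ℝ] EuclideanSpace ℝ (Fin m))
    (y : EuclideanSpace ℝ (Fin n) → EuclideanSpace ℝ (Fin m))
    (hy : ∀ x z, ⟪A x, z⟫_ℝ - h z ≤ ⟪A x, y x⟫_ℝ - h (y x))
    (g : EuclideanSpace ℝ (Fin n) → ℝ)
    (hg : ∀ x, g x = ⟪A x, y x⟫_ℝ - h (y x))
    (hgrad : ∀ x, HasGradientAt g (ContinuousLinearMap.adjoint A (y x)) x)
    (lam : ℝ) (hlam : 0 < lam)
    -- lam is the smallest positive eigenvalue of AᵀA: on (Ker A)ᗮ one has ‖Av‖² ≥ lam‖v‖²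
    (hlam_min : ∀ v ∈ (LinearMap.ker (A : EuclideanSpace ℝ (Fin n) →ₗ[ℝ] EuclideanSpace ℝ (Fin m)))ᗮ, lam * ‖v‖ ^ 2 ≤ ‖A v‖ ^ 2) :
    ∀ x₁ ∈ (LinearMap.ker (A : EuclideanSpace ℝ (Fin n) →ₗ[ℝ] EuclideanSpace ℝ (Fin m)))ᗮ, ∀ x₂ ∈ (LinearMap.ker (A : EuclideanSpace ℝ (Fin n) →ₗ[ℝ] EuclideanSpace ℝ (Fin m)))ᗮ,
      ⟪ContinuousLinearMap.adjoint A (y x₁) - ContinuousLinearMap.adjoint A (y x₂),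
          x₁ - x₂⟫_ℝ ≥ (lam / Ly) * ‖x₁ - x₂‖ ^ 2 :=
  stmt_2_general Ly hLy h hconv h' hdiff hlip A y hy lam hlam_min
end

section
/- Let Q_y ⊆ ℝ^m be convex, Ŝ(x,y) = F(x,y) - h(y) where for each fixed x the function y ↦ Ŝ(x,y) is μ_y-strongly concave on Q_y, and y*(x) its maximizer over Q_y. Assume ∇_x F(x,·) is L_xy-Lipschitz in y uniformly in x, i.e. ‖∇_x F(x,y) - ∇_x F(x,y')‖₂ ≤ L_xy ‖y - y'‖₂. Then for all x₁, x₂, ‖y*(x₂) - y*(x₁)‖₂ ≤ (2 L_xy / μ_y) ‖x₂ - x₁‖₂. -/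
open Set
open scoped InnerProductSpace

/-!
Strong concavity gives quadratic growth at the maximiser: `Φ x y + μ/4 ‖y - y*(x)‖² ≤ Φ x (y*(x))`.
Adding this at `(x₁, y*(x₂))` and at `(x₂, y*(x₁))` bounds `μ/2 ‖y*(x₂) - y*(x₁)‖²` by a cross
difference of `F`, which the mean value inequality and the Lipschitz bound on `∇ₓF` control by
`L ‖y*(x₂) - y*(x₁)‖ ‖x₂ - x₁‖`.
-/

section

variable {E G : Type*}

/-- The midpoint inequality gives the constant `m / 4`; the sharp one is `m / 2`. -/
theorem StrongConcaveOn.add_mul_norm_sub_sq_le_of_isMaxOn [NormedAddCommGroup G] [NormedSpace ℝ G]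
    {s : Set G} {m : ℝ} {f : G → ℝ} {a y : G} (hf : StrongConcaveOn s m f) (ha : a ∈ s)
    (hmax : IsMaxOn f s a) (hy : y ∈ s) :
    f y + m / 4 * ‖y - a‖ ^ 2 ≤ f a := by
  have hhalf : (0 : ℝ) ≤ 1 / 2 := by norm_num
  have hmid := hf.2 ha hy hhalf hhalf (add_halves 1)
  have hle := isMaxOn_iff.mp hmax _ (hf.1 ha hy hhalf hhalf (add_halves 1))
  rw [norm_sub_rev] at hmid
  simp only [smul_eq_mul] at hmid
  linarith

theorem norm_cross_sub_le_of_hasGradientAt [NormedAddCommGroup E] [InnerProductSpace ℝ E]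
    [CompleteSpace E] [SeminormedAddCommGroup G] {L : ℝ} {F : E → G → ℝ} {Fx : E → G → E}
    (hFx : ∀ x y, HasGradientAt (fun x' => F x' y) (Fx x y) x)
    (hFxLip : ∀ x y y', ‖Fx x y - Fx x y'‖ ≤ L * ‖y - y'‖) (x₁ x₂ : E) (y₁ y₂ : G) :
    ‖(F x₂ y₁ - F x₂ y₂) - (F x₁ y₁ - F x₁ y₂)‖ ≤ L * ‖y₁ - y₂‖ * ‖x₂ - x₁‖ := by
  have hderiv : ∀ x, HasFDerivAt (fun x' => F x' y₁ - F x' y₂)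
      (InnerProductSpace.toDual ℝ E (Fx x y₁ - Fx x y₂)) x := fun x => by
    rw [map_sub]
    exact (hFx x y₁).hasFDerivAt.sub (hFx x y₂).hasFDerivAt
  have hbound : ∀ x, ‖InnerProductSpace.toDual ℝ E (Fx x y₁ - Fx x y₂)‖ ≤ L * ‖y₁ - y₂‖ :=
    fun x => by
      rw [LinearIsometryEquiv.norm_map]
      exact hFxLip x y₁ y₂
  exact convex_univ.norm_image_sub_le_of_norm_hasFDerivWithin_le
    (fun x _ => (hderiv x).hasFDerivWithinAt) (fun x _ => hbound x) trivial trivial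

theorem norm_sub_le_of_isMaxOn_of_strongConcaveOn [SeminormedAddCommGroup E]
    [NormedAddCommGroup G] [NormedSpace ℝ G] {s : Set G} {μ L : ℝ} (hμ : 0 < μ) (hL : 0 ≤ L)
    {Φ : E → G → ℝ} (hΦ : ∀ x, StrongConcaveOn s μ (Φ x)) {ystar : E → G}
    (hystar_mem : ∀ x, ystar x ∈ s) (hystar_max : ∀ x, IsMaxOn (Φ x) s (ystar x))
    (hcross : ∀ x₁ x₂ y₁ y₂,
      ‖(Φ x₂ y₁ - Φ x₂ y₂) - (Φ x₁ y₁ - Φ x₁ y₂)‖ ≤ L * ‖y₁ - y₂‖ * ‖x₂ - x₁‖)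
    (x₁ x₂ : E) :
    ‖ystar x₂ - ystar x₁‖ ≤ 2 * L / μ * ‖x₂ - x₁‖ := by
  have hgrowth₁ := (hΦ x₁).add_mul_norm_sub_sq_le_of_isMaxOn (hystar_mem x₁) (hystar_max x₁)
    (hystar_mem x₂)
  have hgrowth₂ := (hΦ x₂).add_mul_norm_sub_sq_le_of_isMaxOn (hystar_mem x₂) (hystar_max x₂)
    (hystar_mem x₁)
  have hcross' := (le_abs_self _).trans (hcross x₂ x₁ (ystar x₁) (ystar x₂))
  rw [norm_sub_rev (ystar x₁), norm_sub_rev x₁] at hcross'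
  rw [norm_sub_rev] at hgrowth₂
  set D := ‖ystar x₂ - ystar x₁‖
  have hsq : μ / 2 * D * D ≤ L * ‖x₂ - x₁‖ * D := by linarith
  rw [div_mul_eq_mul_div, le_div_iff₀ hμ]
  rcases (norm_nonneg _ : 0 ≤ D).eq_or_lt with hD | hD
  · rw [show D = 0 from hD.symm, zero_mul]
    positivity
  · linarith [le_of_mul_le_mul_right hsq hD]

end

theorem stmt_4_general {n m : ℕ} (μy Lxy : ℝ) (hμ : 0 < μy) (hLxy : 0 ≤ Lxy)
    (Qy : Set (EuclideanSpace ℝ (Fin m)))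
    (F : EuclideanSpace ℝ (Fin n) → EuclideanSpace ℝ (Fin m) → ℝ)
    (h : EuclideanSpace ℝ (Fin m) → ℝ)
    -- y ↦ Ŝ(x,y) = F x y - h y is μy-strongly concave on Qy
    (hconc : ∀ x, ConcaveOn ℝ Qy (fun y => F x y - h y + μy / 2 * ‖y‖ ^ 2))
    (ystar : EuclideanSpace ℝ (Fin n) → EuclideanSpace ℝ (Fin m))
    (hystar_mem : ∀ x, ystar x ∈ Qy)
    (hystar_max : ∀ x, ∀ y ∈ Qy, F x y - h y ≤ F x (ystar x) - h (ystar x))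
    (Fx : EuclideanSpace ℝ (Fin n) → EuclideanSpace ℝ (Fin m) → EuclideanSpace ℝ (Fin n))
    (hFx : ∀ x y, HasGradientAt (fun x' => F x' y) (Fx x y) x)
    (hFxLip : ∀ x y y', ‖Fx x y - Fx x y'‖ ≤ Lxy * ‖y - y'‖) :
    ∀ x₁ x₂, ‖ystar x₂ - ystar x₁‖ ≤ (2 * Lxy / μy) * ‖x₂ - x₁‖ := by
  refine norm_sub_le_of_isMaxOn_of_strongConcaveOn (Φ := fun x y => F x y - h y) hμ hLxy
    (fun x => strongConcaveOn_iff_convex.mpr (hconc x)) hystar_mem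
    (fun x => isMaxOn_iff.mpr (hystar_max x)) fun x₁ x₂ y₁ y₂ => ?_
  convert norm_cross_sub_le_of_hasGradientAt hFx hFxLip x₁ x₂ y₁ y₂ using 2
  ring

theorem stmt_4 {n m : ℕ} (μy Lxy : ℝ) (hμ : 0 < μy) (hLxy : 0 ≤ Lxy)
    (Qy : Set (EuclideanSpace ℝ (Fin m))) (hQy : Convex ℝ Qy)
    (F : EuclideanSpace ℝ (Fin n) → EuclideanSpace ℝ (Fin m) → ℝ)
    (h : EuclideanSpace ℝ (Fin m) → ℝ)
    -- y ↦ Ŝ(x,y) = F x y - h y is μy-strongly concave on Qy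
    (hconc : ∀ x, ConcaveOn ℝ Qy (fun y => F x y - h y + μy / 2 * ‖y‖ ^ 2))
    (ystar : EuclideanSpace ℝ (Fin n) → EuclideanSpace ℝ (Fin m))
    (hystar_mem : ∀ x, ystar x ∈ Qy)
    (hystar_max : ∀ x, ∀ y ∈ Qy, F x y - h y ≤ F x (ystar x) - h (ystar x))
    (Fx : EuclideanSpace ℝ (Fin n) → EuclideanSpace ℝ (Fin m) → EuclideanSpace ℝ (Fin n))
    (hFx : ∀ x y, HasGradientAt (fun x' => F x' y) (Fx x y) x)
    (hFxLip : ∀ x y y', ‖Fx x y - Fx x y'‖ ≤ Lxy * ‖y - y'‖) :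
    ∀ x₁ x₂, ‖ystar x₂ - ystar x₁‖ ≤ (2 * Lxy / μy) * ‖x₂ - x₁‖ :=
  stmt_4_general μy Lxy hμ hLxy Qy F h hconc ystar hystar_mem hystar_max Fx hFx hFxLip
end

section
/- In the setting of the previous statement, additionally assume ∇_x F(·,y) is L_xx-Lipschitz in x uniformly in y. Then g(x) := max_{y ∈ Q_y} Ŝ(x,y) is differentiable with ∇g(x) = ∇_x F(x, y*(x)), and ∇g is L-Lipschitz with L = L_xx + 2 L_xy² / μ_y. -/
open Set
open scoped InnerProductSpace

open InnerProductSpace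

variable {E : Type*} [NormedAddCommGroup E] [InnerProductSpace ℝ E] [CompleteSpace E]

/-- Strongly concave function: maximizer inequality. -/
lemma aux_max (μ : ℝ) (hμ : 0 < μ) {Q : Set E} (hQ : Convex ℝ Q) {φ : E → ℝ}
    (hconc : ConcaveOn ℝ Q (fun y => φ y + μ / 2 * ‖y‖ ^ 2)) {y0 : E} (hy0 : y0 ∈ Q)
    (hmax : ∀ y ∈ Q, φ y ≤ φ y0) {y : E} (hy : y ∈ Q) :
    φ y + μ / 2 * ‖y - y0‖ ^ 2 ≤ φ y0 := by
  have key : ∀ t ∈ Ioo (0:ℝ) 1, φ y + μ / 2 * (1 - t) * ‖y - y0‖ ^ 2 ≤ φ y0 := by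
    intro t ht
    have ha0 : (0:ℝ) ≤ 1 - t := by linarith [ht.2]
    have hb0 : (0:ℝ) ≤ t := ht.1.le
    have hmem : (1 - t) • y0 + t • y ∈ Q := hQ hy0 hy ha0 hb0 (by ring)
    have hconcc := hconc.2 hy0 hy ha0 hb0 (by ring : (1 - t) + t = 1)
    have hle : φ ((1 - t) • y0 + t • y) ≤ φ y0 := hmax _ hmem
    have e1 : ‖(1 - t) • y0 + t • y‖ ^ 2
        = (1 - t) ^ 2 * ‖y0‖ ^ 2 + 2 * ((1 - t) * t) * ⟪y0, y⟫_ℝ + t ^ 2 * ‖y‖ ^ 2 := by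
      rw [norm_add_sq_real, norm_smul, norm_smul, real_inner_smul_left, real_inner_smul_right]
      simp only [Real.norm_eq_abs, abs_of_nonneg ha0, abs_of_nonneg hb0]
      ring
    have e2 : ‖y - y0‖ ^ 2 = ‖y‖ ^ 2 - 2 * ⟪y0, y⟫_ℝ + ‖y0‖ ^ 2 := by
      rw [norm_sub_sq_real, real_inner_comm]
      try ring
    simp only [smul_eq_mul] at hconcc
    rw [e1] at hconcc
    rw [e2]
    nlinarith [ht.1, ht.2, hle, hconcc]
  have hcont : Filter.Tendsto (fun t : ℝ => φ y + μ / 2 * (1 - t) * ‖y - y0‖ ^ 2)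
      (nhdsWithin 0 (Ioi 0)) (nhds (φ y + μ / 2 * (1 - 0) * ‖y - y0‖ ^ 2)) := by
    exact ((by fun_prop : Continuous fun t : ℝ => φ y + μ / 2 * (1 - t) * ‖y - y0‖ ^ 2).tendsto
      0).mono_left nhdsWithin_le_nhds
  have := le_of_tendsto hcont (by
    filter_upwards [Ioo_mem_nhdsGT_of_mem (by constructor <;> norm_num : (0:ℝ) ∈ Ico 0 1)]
      with t ht using key t ht)
  simpa using this

/-- Mean value inequality via gradients. -/
lemma grad_mvt {f : E → ℝ} {G : E → E} (hf : ∀ z, HasGradientAt f (G z) z) {C : ℝ}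
    (hb : ∀ z, ‖G z‖ ≤ C) (x y : E) : ‖f y - f x‖ ≤ C * ‖y - x‖ :=
  convex_univ.norm_image_sub_le_of_norm_hasFDerivWithin_le
    (f' := fun z => toDual ℝ E (G z))
    (fun z _ => (hf z).hasFDerivAt.hasFDerivWithinAt)
    (fun z _ => by rw [LinearIsometryEquiv.norm_map]; exact hb z) trivial trivial

/-- Descent-type lemma from Lipschitz gradient. -/
lemma grad_descent {f : E → ℝ} {G : E → E} (hf : ∀ z, HasGradientAt f (G z) z) {L : ℝ}
    (hL : ∀ z z', ‖G z - G z'‖ ≤ L * ‖z - z'‖) (hL0 : 0 ≤ L) (x y : E) :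
    ‖f y - f x - ⟪G x, y - x⟫_ℝ‖ ≤ L * ‖y - x‖ * ‖y - x‖ := by
  have := (convex_segment x y).norm_image_sub_le_of_norm_hasFDerivWithin_le'
    (f' := fun z => toDual ℝ E (G z)) (φ := toDual ℝ E (G x)) (C := L * ‖y - x‖)
    (fun z _ => (hf z).hasFDerivAt.hasFDerivWithinAt)
    (fun z hz => by
      rw [← map_sub, LinearIsometryEquiv.norm_map]
      obtain ⟨a, b, ha, hb, hab, rfl⟩ := hz
      have hzx : a • x + b • y - x = b • (y - x) := by
        rw [smul_sub]
        have : a = 1 - b := by linarith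
        rw [this]; module
      calc ‖G (a • x + b • y) - G x‖ ≤ L * ‖a • x + b • y - x‖ := hL _ _
        _ = L * (b * ‖y - x‖) := by rw [hzx, norm_smul, Real.norm_eq_abs, abs_of_nonneg hb]
        _ ≤ L * ‖y - x‖ := by
            have hb1 : b * ‖y - x‖ ≤ ‖y - x‖ := by
              nlinarith [norm_nonneg (y - x)]
            exact mul_le_mul_of_nonneg_left hb1 hL0)
    (left_mem_segment ℝ x y) (right_mem_segment ℝ x y)
  simpa [toDual_apply_apply] using this

theorem stmt_5 {n m : ℕ} (μy Lxy Lxx : ℝ) (hμ : 0 < μy) (hLxy : 0 ≤ Lxy) (hLxx : 0 ≤ Lxx)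
    (Qy : Set (EuclideanSpace ℝ (Fin m))) (hQy : Convex ℝ Qy)
    (F : EuclideanSpace ℝ (Fin n) → EuclideanSpace ℝ (Fin m) → ℝ)
    (h : EuclideanSpace ℝ (Fin m) → ℝ)
    (hconc : ∀ x, ConcaveOn ℝ Qy (fun y => F x y - h y + μy / 2 * ‖y‖ ^ 2))
    (ystar : EuclideanSpace ℝ (Fin n) → EuclideanSpace ℝ (Fin m))
    (hystar_mem : ∀ x, ystar x ∈ Qy)
    (hystar_max : ∀ x, ∀ y ∈ Qy, F x y - h y ≤ F x (ystar x) - h (ystar x))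
    (Fx : EuclideanSpace ℝ (Fin n) → EuclideanSpace ℝ (Fin m) → EuclideanSpace ℝ (Fin n))
    (hFx : ∀ x y, HasGradientAt (fun x' => F x' y) (Fx x y) x)
    (hFxLipY : ∀ x y y', ‖Fx x y - Fx x y'‖ ≤ Lxy * ‖y - y'‖)
    (hFxLipX : ∀ x x' y, ‖Fx x y - Fx x' y‖ ≤ Lxx * ‖x - x'‖)
    (g : EuclideanSpace ℝ (Fin n) → ℝ)
    (hg : ∀ x, g x = F x (ystar x) - h (ystar x)) :
    (∀ x, HasGradientAt g (Fx x (ystar x)) x) ∧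
      (∀ x₁ x₂, ‖Fx x₁ (ystar x₁) - Fx x₂ (ystar x₂)‖ ≤
        (Lxx + 2 * Lxy ^ 2 / μy) * ‖x₁ - x₂‖) := by
  -- Lipschitz continuity of ystar
  have ylip : ∀ x₁ x₂, μy * ‖ystar x₁ - ystar x₂‖ ≤ Lxy * ‖x₁ - x₂‖ := by
    intro x₁ x₂
    set y₁ := ystar x₁ with hy₁
    set y₂ := ystar x₂ with hy₂
    have A1 := aux_max (φ := fun y => F x₁ y - h y) μy hμ hQy (hconc x₁) (hystar_mem x₁)
      (fun y hy => hystar_max x₁ y hy) (hystar_mem x₂)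
    have A2 := aux_max (φ := fun y => F x₂ y - h y) μy hμ hQy (hconc x₂) (hystar_mem x₂)
      (fun y hy => hystar_max x₂ y hy) (hystar_mem x₁)
    simp only [← hy₁, ← hy₂] at A1 A2
    rw [norm_sub_rev] at A1
    have mvt : ‖(F x₁ y₁ - F x₁ y₂) - (F x₂ y₁ - F x₂ y₂)‖
        ≤ (Lxy * ‖y₁ - y₂‖) * ‖x₁ - x₂‖ :=
      grad_mvt (f := fun z => F z y₁ - F z y₂) (G := fun z => Fx z y₁ - Fx z y₂)
        (fun z => by
          rw [hasGradientAt_iff_hasFDerivAt, map_sub]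
          exact (hFx z y₁).hasFDerivAt.sub (hFx z y₂).hasFDerivAt)
        (fun z => hFxLipY z y₁ y₂) x₂ x₁
    have mvt' : (F x₁ y₁ - F x₁ y₂) - (F x₂ y₁ - F x₂ y₂) ≤ (Lxy * ‖y₁ - y₂‖) * ‖x₁ - x₂‖ :=
      (le_abs_self _).trans (by rwa [Real.norm_eq_abs] at mvt)
    have hd2 : μy * ‖y₁ - y₂‖ ^ 2 ≤ (F x₁ y₁ - F x₁ y₂) - (F x₂ y₁ - F x₂ y₂) := by linarith
    rcases eq_or_lt_of_le (norm_nonneg (y₁ - y₂)) with hd | hd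
    · rw [← hd, mul_zero]
      positivity
    · have : μy * ‖y₁ - y₂‖ ^ 2 ≤ (Lxy * ‖y₁ - y₂‖) * ‖x₁ - x₂‖ := le_trans hd2 mvt'
      nlinarith
  have ylip2 : ∀ x₁ x₂, Lxy * ‖ystar x₁ - ystar x₂‖ * ‖x₁ - x₂‖
      ≤ Lxy ^ 2 / μy * ‖x₁ - x₂‖ ^ 2 := by
    intro x₁ x₂
    rw [div_mul_eq_mul_div, le_div_iff₀ hμ]
    nlinarith [mul_le_mul_of_nonneg_left (ylip x₁ x₂) hLxy, norm_nonneg (x₁ - x₂),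
      mul_le_mul_of_nonneg_right (mul_le_mul_of_nonneg_left (ylip x₁ x₂) hLxy)
        (norm_nonneg (x₁ - x₂))]
  -- quadratic error bound for g
  have bound : ∀ x x', |g x' - g x - ⟪Fx x (ystar x), x' - x⟫_ℝ|
      ≤ (Lxx + Lxy ^ 2 / μy) * ‖x' - x‖ ^ 2 := by
    intro x x'
    have d1 : ‖F x' (ystar x) - F x (ystar x) - ⟪Fx x (ystar x), x' - x⟫_ℝ‖
        ≤ Lxx * ‖x' - x‖ * ‖x' - x‖ :=
      grad_descent (f := fun z => F z (ystar x)) (G := fun z => Fx z (ystar x))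
        (fun z => hFx z (ystar x)) (fun z z' => hFxLipX z z' (ystar x)) hLxx x x'
    have d2 : ‖F x' (ystar x') - F x (ystar x') - ⟪Fx x (ystar x'), x' - x⟫_ℝ‖
        ≤ Lxx * ‖x' - x‖ * ‖x' - x‖ :=
      grad_descent (f := fun z => F z (ystar x')) (G := fun z => Fx z (ystar x'))
        (fun z => hFx z (ystar x')) (fun z z' => hFxLipX z z' (ystar x')) hLxx x x'
    rw [Real.norm_eq_abs, abs_le] at d1 d2
    have up : g x' - g x ≤ F x' (ystar x') - F x (ystar x') := by
      rw [hg x', hg x]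
      linarith [hystar_max x (ystar x') (hystar_mem x')]
    have lo : F x' (ystar x) - F x (ystar x) ≤ g x' - g x := by
      rw [hg x', hg x]
      linarith [hystar_max x' (ystar x) (hystar_mem x)]
    have idiff : |⟪Fx x (ystar x'), x' - x⟫_ℝ - ⟪Fx x (ystar x), x' - x⟫_ℝ|
        ≤ Lxy ^ 2 / μy * ‖x' - x‖ ^ 2 := by
      rw [← inner_sub_left]
      calc |⟪Fx x (ystar x') - Fx x (ystar x), x' - x⟫_ℝ|
          ≤ ‖Fx x (ystar x') - Fx x (ystar x)‖ * ‖x' - x‖ := abs_real_inner_le_norm _ _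
        _ ≤ Lxy * ‖ystar x' - ystar x‖ * ‖x' - x‖ :=
            mul_le_mul_of_nonneg_right (hFxLipY x (ystar x') (ystar x)) (norm_nonneg _)
        _ ≤ Lxy ^ 2 / μy * ‖x' - x‖ ^ 2 := ylip2 x' x
    rw [abs_le] at idiff ⊢
    have hsq : ‖x' - x‖ * ‖x' - x‖ = ‖x' - x‖ ^ 2 := (sq ‖x' - x‖).symm
    constructor
    · nlinarith [d1.1]
    · nlinarith [d2.2, idiff.2]
  refine ⟨fun x => ?_, fun x₁ x₂ => ?_⟩
  · rw [hasGradientAt_iff_hasFDerivAt, hasFDerivAt_iff_isLittleO_nhds_zero,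
      Asymptotics.isLittleO_iff]
    intro c hc
    set C := Lxx + Lxy ^ 2 / μy with hC
    have hC0 : 0 ≤ C := by positivity
    have hC1 : 0 < C + 1 := by linarith
    rw [Metric.eventually_nhds_iff]
    refine ⟨c / (C + 1), by positivity, fun v hv => ?_⟩
    have hb := bound x (x + v)
    simp only [add_sub_cancel_left] at hb
    have hr : ‖v‖ * (C + 1) ≤ c := by
      rw [dist_zero_right] at hv
      nlinarith [(le_div_iff₀ hC1).mp hv.le]
    have key : C * ‖v‖ ^ 2 ≤ c * ‖v‖ := by nlinarith [norm_nonneg v, sq_nonneg ‖v‖]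
    calc ‖g (x + v) - g x - (toDual ℝ _ (Fx x (ystar x))) v‖
        = |g (x + v) - g x - ⟪Fx x (ystar x), v⟫_ℝ| := by
          rw [Real.norm_eq_abs, toDual_apply_apply]
      _ ≤ C * ‖v‖ ^ 2 := hb
      _ ≤ c * ‖v‖ := key
  · have tri := dist_triangle (Fx x₁ (ystar x₁)) (Fx x₂ (ystar x₁)) (Fx x₂ (ystar x₂))
    simp only [dist_eq_norm] at tri
    have h1 := hFxLipX x₁ x₂ (ystar x₁)
    have h2 := hFxLipY x₂ (ystar x₁) (ystar x₂)
    have h3 : Lxy * ‖ystar x₁ - ystar x₂‖ * μy ≤ Lxy ^ 2 * ‖x₁ - x₂‖ := by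
      nlinarith [mul_le_mul_of_nonneg_left (ylip x₁ x₂) hLxy]
    have h4 : Lxy * ‖ystar x₁ - ystar x₂‖ ≤ 2 * Lxy ^ 2 / μy * ‖x₁ - x₂‖ := by
      rw [div_mul_eq_mul_div, le_div_iff₀ hμ]
      nlinarith [sq_nonneg Lxy, norm_nonneg (x₁ - x₂)]
    calc ‖Fx x₁ (ystar x₁) - Fx x₂ (ystar x₂)‖
        ≤ ‖Fx x₁ (ystar x₁) - Fx x₂ (ystar x₁)‖ + ‖Fx x₂ (ystar x₁) - Fx x₂ (ystar x₂)‖ := tri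
      _ ≤ Lxx * ‖x₁ - x₂‖ + 2 * Lxy ^ 2 / μy * ‖x₁ - x₂‖ := by linarith
      _ = (Lxx + 2 * Lxy ^ 2 / μy) * ‖x₁ - x₂‖ := by ring
end

section
/- Let P = r + g where r is μ_r-strongly convex with L_r-Lipschitz gradient and g is μ_g-strongly convex with L_g-Lipschitz gradient, and suppose r admits a (δ_r, L_r, μ_r)-gradient ∇r_{δ_r}, i.e. for all x, y: (μ_r/2)‖x-y‖₂² - δ_r ≤ r(x) - r(y) - ⟨∇r_{δ_r}(y), x - y⟩ ≤ (L_r/2)‖x-y‖₂² + δ_r. Let ŷ = prox_{(1/L_r) g}(x̄ - (1/L_r)∇r_{δ_r}(x̄)), i.e. ŷ = x̄ - (1/L_r)∇r_{δ_r}(x̄) - (1/L_r)∇g(ŷ). Then for every x: ⟨x̄ - ŷ, x - x̄⟩ ≤ (1/(L_r + μ_g)) [ P(x) - P(ŷ) - ((μ_r+μ_g)/4)‖x - x̄‖₂² - ((L_r+μ_g)/4)‖ŷ - x̄‖₂² + 2δ_r ]. -/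
open scoped InnerProductSpace

theorem stmt_13 {n : ℕ} (μr Lr μg Lg δr : ℝ)
    (hμr : 0 ≤ μr) (hLr : 0 < Lr) (hμrLr : μr ≤ Lr)
    (hμg : 0 ≤ μg) (hLg : 0 < Lg) (hμgLg : μg ≤ Lg)
    (hμ : 0 < μr + μg) (hδr : 0 ≤ δr)
    (r g : EuclideanSpace ℝ (Fin n) → ℝ)
    (r' g' : EuclideanSpace ℝ (Fin n) → EuclideanSpace ℝ (Fin n))
    (hr' : ∀ x, HasGradientAt r (r' x) x)
    (hg' : ∀ x, HasGradientAt g (g' x) x)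
    (hr_sand : ∀ x y, μr / 2 * ‖x - y‖ ^ 2 ≤ r x - r y - ⟪r' y, x - y⟫_ℝ ∧
      r x - r y - ⟪r' y, x - y⟫_ℝ ≤ Lr / 2 * ‖x - y‖ ^ 2)
    (hg_sand : ∀ x y, μg / 2 * ‖x - y‖ ^ 2 ≤ g x - g y - ⟪g' y, x - y⟫_ℝ ∧
      g x - g y - ⟪g' y, x - y⟫_ℝ ≤ Lg / 2 * ‖x - y‖ ^ 2)
    (rδ : EuclideanSpace ℝ (Fin n) → EuclideanSpace ℝ (Fin n))
    (hrδ : ∀ x y, μr / 2 * ‖x - y‖ ^ 2 - δr ≤ r x - r y - ⟪rδ y, x - y⟫_ℝ ∧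
      r x - r y - ⟪rδ y, x - y⟫_ℝ ≤ Lr / 2 * ‖x - y‖ ^ 2 + δr)
    (xbar yhat : EuclideanSpace ℝ (Fin n))
    (hyhat : yhat = xbar - (1 / Lr) • rδ xbar - (1 / Lr) • g' yhat) :
    ∀ x, ⟪xbar - yhat, x - xbar⟫_ℝ ≤ (1 / (Lr + μg)) *
      ((r x + g x) - (r yhat + g yhat) - (μr + μg) / 4 * ‖x - xbar‖ ^ 2 -
        (Lr + μg) / 4 * ‖yhat - xbar‖ ^ 2 + 2 * δr) := by

  intro x
  have hLμ : 0 < Lr + μg := by linarith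
  have hLr1 : Lr * (1 / Lr) = 1 := by field_simp
  have hsum : Lr • (xbar - yhat) = rδ xbar + g' yhat := by
    have h0 : xbar - yhat = (1 / Lr) • rδ xbar + (1 / Lr) • g' yhat := by
      conv_lhs => rw [hyhat]
      abel
    rw [h0, smul_add, smul_smul, smul_smul, hLr1, one_smul, one_smul]
  have h1 := (hrδ x xbar).1
  have h2 := (hrδ yhat xbar).2
  have h3 := (hg_sand x yhat).1
  have hinner : ⟪rδ xbar, x - xbar⟫_ℝ - ⟪rδ xbar, yhat - xbar⟫_ℝ + ⟪g' yhat, x - yhat⟫_ℝ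
      = Lr * (⟪xbar - yhat, x - xbar⟫_ℝ + ‖xbar - yhat‖ ^ 2) := by
    have e1 : ⟪rδ xbar, x - xbar⟫_ℝ - ⟪rδ xbar, yhat - xbar⟫_ℝ = ⟪rδ xbar, x - yhat⟫_ℝ := by
      rw [← inner_sub_right]
      congr 1
      abel
    rw [e1, ← inner_add_left, ← hsum, real_inner_smul_left]
    have e2 : ⟪xbar - yhat, x - yhat⟫_ℝ
        = ⟪xbar - yhat, x - xbar⟫_ℝ + ⟪xbar - yhat, xbar - yhat⟫_ℝ := by
      rw [← inner_add_right]
      congr 1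
      abel
    rw [e2, real_inner_self_eq_norm_sq]
  have hn : ‖x - yhat‖ ^ 2 = ‖x - xbar‖ ^ 2 + 2 * ⟪x - xbar, xbar - yhat⟫_ℝ
      + ‖xbar - yhat‖ ^ 2 := by
    have : x - yhat = (x - xbar) + (xbar - yhat) := by abel
    rw [this, norm_add_sq_real]
  have hc : ⟪x - xbar, xbar - yhat⟫_ℝ = ⟪xbar - yhat, x - xbar⟫_ℝ := real_inner_comm _ _
  have hn2 : ‖yhat - xbar‖ ^ 2 = ‖xbar - yhat‖ ^ 2 := by
    rw [norm_sub_rev]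
  rw [one_div, inv_mul_eq_div, le_div_iff₀ hLμ]
  have hsq1 : 0 ≤ ‖x - xbar‖ ^ 2 := sq_nonneg _
  have hsq2 : 0 ≤ ‖xbar - yhat‖ ^ 2 := sq_nonneg _
  nlinarith [mul_nonneg hμg hsq1, mul_nonneg (le_of_lt hμ) hsq1,
    mul_nonneg hLμ.le hsq2, mul_nonneg hμr hsq1]
end
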